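/- Maximal output: in every UAPC-derivable annotated sequent Γ (labeled i⃗) ⊢^χ_Σ Δ (labeled j⃗), the output set Σ mentions at least the labels that appear in Γ ⊢ Δ; that is, for every label l ∈ i⃗ ∪ j⃗ there exists a mutation set M with l_M ∈ Σ. (Observation 2.) -/

import Mathlib

/-!
Core formalization for "A Usage-Aware Sequent Calculus for Differential Dynamic Logic".

We formalize:
* labeled dL syntax (terms, hybrid programs, formulas) where every atom carries a unique label,
* the standard dL semantics (states, term valuation, program transition relations with ODEs
  interpreted via `HasDerivAt`, formula satisfaction) and validity of sequents,
* mutations {id, W, R}, mutation choices (one chosen mutation per label), the mutation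
  operator μ, label sets (maps from labels to sets of admissible mutations), merge ⊔,
  set difference, and choices of mutation operators for a label set.
-/

/-- The three mutations considered in the paper. -/
inductive Mutation : Type
  | id | W | R
  deriving DecidableEq

/-- Labels identify atoms of a dL sequent. -/
abbrev Label := ℕ

/-- dL terms: variables, rational constants, sums and products (polynomials). -/
inductive Trm : Type
  | var (x : ℕ)
  | const (c : ℚ)
  | add (e d : Trm)
  | mul (e d : Trm)

/-- Comparison operators `=`, `≥`, `>`. -/
inductive Cmp : Type
  | eq | ge | gt
  deriving DecidableEq

mutual
/-- Labeled dL formulas: every atomic formula carries a label. -/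
inductive Fml : Type
  | tt (l : Label)
  | ff (l : Label)
  | cmp (l : Label) (c : Cmp) (e d : Trm)
  | pred (l : Label) (p : ℕ) (args : List Trm)
  | not (P : Fml)
  | and (P Q : Fml)
  | or (P Q : Fml)
  | imp (P Q : Fml)
  | iff (P Q : Fml)
  | all (x : ℕ) (P : Fml)
  | ex (x : ℕ) (P : Fml)
  | box (a : Prg) (P : Fml)
  | dia (a : Prg) (P : Fml)

/-- Labeled hybrid programs: every atomic program carries a label. -/
inductive Prg : Type
  | assign (l : Label) (x : ℕ) (e : Trm)
  | anyAssign (l : Label) (x : ℕ)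
  | ode (l : Label) (x : ℕ) (e : Trm) (Q : Fml)
  | test (Q : Fml)
  | seq (a b : Prg)
  | choice (a b : Prg)
  | star (a : Prg)
end

/-- States assign real values to variables. -/
abbrev State := ℕ → ℝ

/-- Interpretations of predicate symbols. -/
abbrev Interp := ℕ → List ℝ → Prop

/-- Valuation of terms. -/
def Trm.val (s : State) : Trm → ℝ
  | .var x => s x
  | .const c => (c : ℝ)
  | .add e d => e.val s + d.val s
  | .mul e d => e.val s * d.val s

mutual
/-- Standard dL satisfaction relation for formulas. -/
def Fml.sat (I : Interp) : Fml → State → Prop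
  | .tt _, _ => True
  | .ff _, _ => False
  | .cmp _ .eq e d, s => e.val s = d.val s
  | .cmp _ .ge e d, s => e.val s ≥ d.val s
  | .cmp _ .gt e d, s => e.val s > d.val s
  | .pred _ p args, s => I p (args.map (Trm.val s))
  | .not P, s => ¬ Fml.sat I P s
  | .and P Q, s => Fml.sat I P s ∧ Fml.sat I Q s
  | .or P Q, s => Fml.sat I P s ∨ Fml.sat I Q s
  | .imp P Q, s => Fml.sat I P s → Fml.sat I Q s
  | .iff P Q, s => Fml.sat I P s ↔ Fml.sat I Q s
  | .all x P, s => ∀ r : ℝ, Fml.sat I P (Function.update s x r)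
  | .ex x P, s => ∃ r : ℝ, Fml.sat I P (Function.update s x r)
  | .box a P, s => ∀ s', Prg.rel I a s s' → Fml.sat I P s'
  | .dia a P, s => ∃ s', Prg.rel I a s s' ∧ Fml.sat I P s'

/-- Standard dL transition relation for hybrid programs; the differential
equation `x' = e & Q` evolves `x` along a differentiable solution that
satisfies the evolution domain constraint `Q` throughout. -/
def Prg.rel (I : Interp) : Prg → State → State → Prop
  | .assign _ x e, s, s' => s' = Function.update s x (Trm.val s e)
  | .anyAssign _ x, s, s' => ∃ r : ℝ, s' = Function.update s x r
  | .ode _ x e Q, s, s' =>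
      ∃ (T : ℝ) (f : ℝ → ℝ), 0 ≤ T ∧ f 0 = s x ∧ s' = Function.update s x (f T) ∧
        ∀ t ∈ Set.Icc (0 : ℝ) T,
          HasDerivAt f (Trm.val (Function.update s x (f t)) e) t ∧
          Fml.sat I Q (Function.update s x (f t))
  | .test Q, s, s' => s' = s ∧ Fml.sat I Q s
  | .seq a b, s, s' => ∃ m, Prg.rel I a s m ∧ Prg.rel I b m s'
  | .choice a b, s, s' => Prg.rel I a s s' ∨ Prg.rel I b s s'
  | .star a, s, s' => Relation.ReflTransGen (fun u v => Prg.rel I a u v) s s'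
end

/-- A dL sequent `Γ ⊢ Δ` is valid iff `⋀Γ → ⋁Δ` is valid in every state
under every interpretation. -/
def SeqValid (Γ Δ : List Fml) : Prop :=
  ∀ (I : Interp) (s : State), (∀ P ∈ Γ, Fml.sat I P s) → ∃ Q ∈ Δ, Fml.sat I Q s

mutual
/-- Labels occurring in a formula. -/
def fmlLabels : Fml → List Label
  | .tt l => [l]
  | .ff l => [l]
  | .cmp l _ _ _ => [l]
  | .pred l _ _ => [l]
  | .not P => fmlLabels P
  | .and P Q => fmlLabels P ++ fmlLabels Q
  | .or P Q => fmlLabels P ++ fmlLabels Q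
  | .imp P Q => fmlLabels P ++ fmlLabels Q
  | .iff P Q => fmlLabels P ++ fmlLabels Q
  | .all _ P => fmlLabels P
  | .ex _ P => fmlLabels P
  | .box a P => prgLabels a ++ fmlLabels P
  | .dia a P => prgLabels a ++ fmlLabels P

/-- Labels occurring in a program. -/
def prgLabels : Prg → List Label
  | .assign l _ _ => [l]
  | .anyAssign l _ => [l]
  | .ode l _ _ Q => l :: fmlLabels Q
  | .test Q => fmlLabels Q
  | .seq a b => prgLabels a ++ prgLabels b
  | .choice a b => prgLabels a ++ prgLabels b
  | .star a => prgLabels a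
end

/-- Labels of a list of formulas. -/
def ctxLabels (Γ : List Fml) : List Label :=
  Γ.foldr (fun P acc => fmlLabels P ++ acc) []

/-- Labels of a sequent `Γ ⊢ Δ`. -/
def seqLabels (Γ Δ : List Fml) : List Label :=
  ctxLabels Γ ++ ctxLabels Δ

/-- A mutation choice assigns to (some) labels a single chosen mutation. -/
def MutChoice := Label → Option Mutation

mutual
/-- The mutation operator `μ` on formulas: it traverses the formula and replaces
every atom whose label has a chosen mutation by its mutated form.  `id` leaves the
atom unchanged; `R` replaces atomic formulas by `true` and atomic programs by the
effect-free test `?true`; `W` weakens the atom (canonically `e > d` becomes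
`e ≥ d`; other atoms are left unchanged).  Atoms whose label is not mentioned are
unchanged. -/
def applyFml (μ : MutChoice) : Fml → Fml
  | .tt l => .tt l
  | .ff l => .ff l
  | .cmp l c e d =>
      match μ l, c with
      | some .R, _ => .tt l
      | some .W, .gt => .cmp l .ge e d
      | _, _ => .cmp l c e d
  | .pred l p args =>
      match μ l with
      | some .R => .tt l
      | _ => .pred l p args
  | .not P => .not (applyFml μ P)
  | .and P Q => .and (applyFml μ P) (applyFml μ Q)
  | .or P Q => .or (applyFml μ P) (applyFml μ Q)
  | .imp P Q => .imp (applyFml μ P) (applyFml μ Q)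
  | .iff P Q => .iff (applyFml μ P) (applyFml μ Q)
  | .all x P => .all x (applyFml μ P)
  | .ex x P => .ex x (applyFml μ P)
  | .box a P => .box (applyPrg μ a) (applyFml μ P)
  | .dia a P => .dia (applyPrg μ a) (applyFml μ P)

/-- The mutation operator `μ` on programs. -/
def applyPrg (μ : MutChoice) : Prg → Prg
  | .assign l x e =>
      match μ l with
      | some .R => .test (.tt l)
      | _ => .assign l x e
  | .anyAssign l x =>
      match μ l with
      | some .R => .test (.tt l)
      | _ => .anyAssign l x
  | .ode l x e Q =>
      match μ l with
      | some .R => .test (applyFml μ Q)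
      | _ => .ode l x e (applyFml μ Q)
  | .test Q => .test (applyFml μ Q)
  | .seq a b => .seq (applyPrg μ a) (applyPrg μ b)
  | .choice a b => .choice (applyPrg μ a) (applyPrg μ b)
  | .star a => .star (applyPrg μ a)
end

/-- Validity of the sequent obtained by applying the mutation operator `μ`. -/
def MutSeqValid (μ : MutChoice) (Γ Δ : List Fml) : Prop :=
  SeqValid (Γ.map (applyFml μ)) (Δ.map (applyFml μ))

/-- A label set assigns to (some) labels a set of admissible mutations;
`none` means the label is not mentioned. -/
def LabelSet := Label → Option (Set Mutation)

/-- The merge `Σ ⊔ Ω` of two label sets: labels occurring in both track the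
intersection of their mutation sets; labels occurring in exactly one are kept. -/
def LabelSet.merge (S T : LabelSet) : LabelSet := fun l =>
  match S l, T l with
  | some M, some N => some (M ∩ N)
  | some M, none => some M
  | none, o => o

/-- Set difference `Σ ∖ l⃗`: removes every entry whose label lies in `ls`
regardless of its mutation set. -/
def LabelSet.removeAll (S : LabelSet) (ls : List Label) : LabelSet := fun l =>
  if l ∈ ls then none else S l

/-- Restriction of a label set to the labels in `ls`. -/
def LabelSet.restrict (S : LabelSet) (ls : List Label) : LabelSet := fun l =>
  if l ∈ ls then S l else none

/-- The label set assigning every mutation (`any`) to the given labels. -/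
def anyLS (ls : List Label) : LabelSet := fun l =>
  if l ∈ ls then some Set.univ else none

/-- The label set assigning only the identity mutation to a single label. -/
def idLS (l : Label) : LabelSet := fun k =>
  if k = l then some {Mutation.id} else none

/-- `μ` is a choice of the mutation operator for the label set `S`: it selects,
for every entry `l_M ∈ S`, one mutation `m ∈ M`, and mentions no other labels. -/
def IsChoice (μ : MutChoice) (S : LabelSet) : Prop :=
  ∀ l, (S l = none → μ l = none) ∧ (∀ M, S l = some M → ∃ m ∈ M, μ l = some m)
/-- The usage-aware proof calculus UAPC (a representative core of the calculus of
the paper): judgments are annotated sequents `Γ ⊢^χ_Σ Δ`, written `UAPC χ Γ Σ Δ`,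
where `χ` is the input label set and `Σ` the output label set.  Single-premise
rules pass `χ` up and `Σ` down; multi-premise rules merge (⊔) the outputs of
their premises; cut-like rules (`cut`, `loop`) label cut formulas with labels
that are either reused from the conclusion's context or fresh, and remove the
fresh labels from the conclusion's output set; weakening rules add the weakened
formula's labels with mutation set `{id, W, R}`; the leaf rule `id` outputs
`{(i⃗⋈j⃗)_any, k⃗_any, l⃗_any} ⊔ χ` (here the two occurrences of `P` are the same
labeled formula, so fusing is automatic), `⊤R` and `⊥L` output their fixed sets,
and `da` covers the leaves QE, ℝ, auto, outputting `DA(i⃗,j⃗) ⊔ χ` where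
`DA(i⃗,j⃗)` mentions every label of the leaf sequent and every choice of
`μ_{DA(i⃗,j⃗)}` applied to a valid leaf sequent yields a valid sequent. -/
inductive UAPC : LabelSet → List Fml → LabelSet → List Fml → Prop
  | id {χ : LabelSet} (P : Fml) (Γ Δ : List Fml) :
      UAPC χ (P :: Γ)
        ((anyLS (fmlLabels P ++ seqLabels Γ Δ)).merge χ) (P :: Δ)
  | topR {χ : LabelSet} (l : Label) (Γ Δ : List Fml) :
      UAPC χ Γ (((idLS l).merge (anyLS (seqLabels Γ Δ))).merge χ) (Fml.tt l :: Δ)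
  | botL {χ : LabelSet} (l : Label) (Γ Δ : List Fml) :
      UAPC χ (Fml.ff l :: Γ) (((idLS l).merge (anyLS (seqLabels Γ Δ))).merge χ) Δ
  | da {χ : LabelSet} (D : LabelSet) (Γ Δ : List Fml)
      (hval : SeqValid Γ Δ)
      (hcover : ∀ l ∈ seqLabels Γ Δ, ∃ M, D l = some M)
      (hDA : SeqValid Γ Δ → ∀ μ, IsChoice μ D → MutSeqValid μ Γ Δ) :
      UAPC χ Γ (D.merge χ) Δ
  | negR {χ S : LabelSet} {Γ Δ : List Fml} {P : Fml} :
      UAPC χ (P :: Γ) S Δ → UAPC χ Γ S (Fml.not P :: Δ)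
  | negL {χ S : LabelSet} {Γ Δ : List Fml} {P : Fml} :
      UAPC χ Γ S (P :: Δ) → UAPC χ (Fml.not P :: Γ) S Δ
  | andR {χ S O : LabelSet} {Γ : List Fml} {P Q : Fml} :
      UAPC χ Γ S [P] → UAPC χ Γ O [Q] → UAPC χ Γ (S.merge O) [Fml.and P Q]
  | orR {χ S : LabelSet} {Γ Δ : List Fml} {P Q : Fml} :
      UAPC χ Γ S (P :: Q :: Δ) → UAPC χ Γ S (Fml.or P Q :: Δ)
  | impR {χ S : LabelSet} {Γ Δ : List Fml} {P Q : Fml} :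
      UAPC χ (P :: Γ) S (Q :: Δ) → UAPC χ Γ S (Fml.imp P Q :: Δ)
  | andL {χ S : LabelSet} {Γ Δ : List Fml} {P Q : Fml} :
      UAPC χ (P :: Q :: Γ) S Δ → UAPC χ (Fml.and P Q :: Γ) S Δ
  | orL {χ S O : LabelSet} {Γ Δ : List Fml} {P Q : Fml} :
      UAPC χ (P :: Γ) S Δ → UAPC χ (Q :: Γ) O Δ →
      UAPC χ (Fml.or P Q :: Γ) (S.merge O) Δ
  | impL {χ S O : LabelSet} {Γ Δ : List Fml} {P Q : Fml} :
      UAPC χ Γ S (P :: Δ) → UAPC χ (Q :: Γ) O Δ →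
      UAPC χ (Fml.imp P Q :: Γ) (S.merge O) Δ
  | wkL {χ S : LabelSet} {Γ Δ : List Fml} (P : Fml) :
      UAPC χ Γ S Δ → UAPC χ (P :: Γ) (S.merge (anyLS (fmlLabels P))) Δ
  | wkR {χ S : LabelSet} {Γ Δ : List Fml} (P : Fml) :
      UAPC χ Γ S Δ → UAPC χ Γ (S.merge (anyLS (fmlLabels P))) (P :: Δ)
  | perm {χ S : LabelSet} {Γ Γ' Δ Δ' : List Fml} :
      Γ.Perm Γ' → Δ.Perm Δ' → UAPC χ Γ S Δ → UAPC χ Γ' S Δ'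
  | cut {χ S O : LabelSet} {Γ Δ : List Fml} (C : Fml) (ls : List Label)
      (hφ : ∀ l ∈ fmlLabels C, l ∈ seqLabels Γ Δ ∨ l ∈ ls)
      (hfresh : ∀ l ∈ ls, l ∉ seqLabels Γ Δ ∧ χ l = none) :
      UAPC χ (C :: Γ) S Δ → UAPC χ Γ O (C :: Δ) →
      UAPC χ Γ ((S.merge O).removeAll ls) Δ
  | loop {χ S O Th : LabelSet} {Γ Δ : List Fml} (J P : Fml) (a : Prg) (ls : List Label)
      (hφ : ∀ l ∈ fmlLabels J, l ∈ seqLabels Γ (Fml.box (Prg.star a) P :: Δ) ∨ l ∈ ls)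
      (hfresh : ∀ l ∈ ls, l ∉ seqLabels Γ (Fml.box (Prg.star a) P :: Δ) ∧ χ l = none) :
      UAPC χ Γ S (J :: Δ) → UAPC χ [J] O [P] → UAPC χ [J] Th [Fml.box a J] →
      UAPC χ Γ (((S.merge O).merge Th).removeAll ls) (Fml.box (Prg.star a) P :: Δ)

/-! Induction on the derivation. Every rule passes the outputs of its premises down, merges
them with `⊔` (which never drops a label), or adds the labels of the formulas it introduces.
The only labels ever removed are the fresh labels of cut formulas, and freshness says exactly
that they do not occur in the conclusion. -/

namespace LabelSet

def support (S : LabelSet) : Set Label := {l | ∃ M, S l = some M}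

@[simp]
theorem mem_support {S : LabelSet} {l : Label} : l ∈ S.support ↔ ∃ M, S l = some M :=
  Iff.rfl

@[simp]
theorem support_merge (S T : LabelSet) : (S.merge T).support = S.support ∪ T.support := by
  ext l
  simp only [mem_support, Set.mem_union, merge]
  cases S l <;> cases T l <;> simp

@[simp]
theorem support_removeAll (S : LabelSet) (ls : List Label) :
    (S.removeAll ls).support = S.support \ {l | l ∈ ls} := by
  ext l
  by_cases hl : l ∈ ls <;> simp [removeAll, hl]

end LabelSet

@[simp]
theorem support_anyLS (ls : List Label) : (anyLS ls).support = {l | l ∈ ls} := by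
  ext l
  by_cases hl : l ∈ ls <;> simp [anyLS, hl]

@[simp]
theorem support_idLS (l : Label) : (idLS l).support = {l} := by
  ext k
  by_cases hk : k = l <;> simp [idLS, hk]

@[simp]
theorem ctxLabels_nil : ctxLabels [] = [] := rfl

@[simp]
theorem ctxLabels_cons (P : Fml) (Γ : List Fml) :
    ctxLabels (P :: Γ) = fmlLabels P ++ ctxLabels Γ := rfl

theorem mem_ctxLabels {l : Label} {Γ : List Fml} :
    l ∈ ctxLabels Γ ↔ ∃ P ∈ Γ, l ∈ fmlLabels P := by
  induction Γ with
  | nil => simp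
  | cons P Γ ih => simp [ih]

theorem List.Perm.mem_ctxLabels_iff {Γ Γ' : List Fml} (h : Γ.Perm Γ') {l : Label} :
    l ∈ ctxLabels Γ ↔ l ∈ ctxLabels Γ' := by
  simp only [mem_ctxLabels, h.mem_iff]

theorem UAPC.mem_support_of_mem_seqLabels {χ S : LabelSet} {Γ Δ : List Fml}
    (h : UAPC χ Γ S Δ) {l : Label} (hl : l ∈ seqLabels Γ Δ) : l ∈ S.support := by
  induction h with
  | da D Γ Δ _ hcover _ =>
    rw [LabelSet.support_merge]
    exact Or.inl (hcover l hl)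
  | perm hΓ hΔ _ ih =>
    apply ih
    simpa only [seqLabels, List.mem_append, hΓ.mem_ctxLabels_iff, hΔ.mem_ctxLabels_iff] using hl
  | cut C ls _ hfresh _ _ ih _ =>
    rw [LabelSet.support_removeAll, LabelSet.support_merge]
    refine ⟨Or.inl (ih ?_), fun hls => (hfresh l hls).1 hl⟩
    simp only [seqLabels, ctxLabels_cons, List.mem_append] at hl ⊢
    tauto
  | loop J P a ls _ hfresh _ _ _ ih₁ ih₂ ih₃ =>
    rw [LabelSet.support_removeAll, LabelSet.support_merge, LabelSet.support_merge]
    refine ⟨?_, fun hls => (hfresh l hls).1 hl⟩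
    simp only [seqLabels, ctxLabels_cons, ctxLabels_nil, fmlLabels, prgLabels, List.mem_append,
      List.not_mem_nil, or_false] at hl ih₁ ih₂ ih₃
    rcases hl with h | (h | h) | h
    · exact .inl (.inl (ih₁ (.inl h)))
    · exact .inr (ih₃ (.inr (.inl h)))
    · exact .inl (.inr (ih₂ (.inr h)))
    · exact .inl (.inl (ih₁ (.inr (.inr h))))
  | _ =>
    simp only [seqLabels, ctxLabels_cons, ctxLabels_nil, fmlLabels, List.mem_append,
      List.mem_singleton, List.not_mem_nil, or_false, LabelSet.support_merge, support_anyLS,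
      support_idLS, Set.mem_union, Set.mem_ofPred_eq, Set.mem_singleton_iff] at *
    tauto

/-- **Observation 2 (Maximal output).** In every UAPC-derivable annotated sequent
`Γ ⊢^χ_Σ Δ`, the output set `Σ` mentions at least the labels appearing in
`Γ ⊢ Δ`: for every label `l` of the sequent there is a mutation set `M` with
`l_M ∈ Σ`. -/
theorem uapc_maximal_output (χ Sg : LabelSet) (Γ Δ : List Fml)
    (h : UAPC χ Γ Sg Δ) :
    ∀ l ∈ seqLabels Γ Δ, ∃ M : Set Mutation, Sg l = some M :=
  fun _ hl => h.mem_support_of_mem_seqLabels hl
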